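/- Let K be a tetrahedron with face F_l opposite vertex x_l, barycenter x_K, unit outward normal n_l to F_l, and barycentric coordinates λ's. For i ∈ {1,2} and face-vertex index l_i, define φ_{F_l,i} := (1/4)(8λ_l − 3)(x − x_K) × (n_l × ∇λ_{l_i}) + (1/4)((x_l − x_K)·n_l) ∇λ_{l_i} + (1/16) n_l. Then curl φ_{F_l,i} = 2(1 − 3λ_l) n_l × ∇λ_{l_i}. -/

import Mathlib

open MeasureTheory

noncomputable section

abbrev V3 := Fin 3 → ℝ

def pd (i : Fin 3) (f : V3 → ℝ) (x : V3) : ℝ := fderiv ℝ f x (Pi.single i 1)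

def grad (f : V3 → ℝ) (x : V3) : V3 := fun i => pd i f x

def curl (v : V3 → V3) (x : V3) : V3 :=
  ![pd 1 (fun y => v y 2) x - pd 2 (fun y => v y 1) x,
    pd 2 (fun y => v y 0) x - pd 0 (fun y => v y 2) x,
    pd 0 (fun y => v y 1) x - pd 1 (fun y => v y 0) x]

def divg (v : V3 → V3) (x : V3) : ℝ := ∑ i, pd i (fun y => v y i) x

def cross3 (a b : V3) : V3 :=
  ![a 1 * b 2 - a 2 * b 1, a 2 * b 0 - a 0 * b 2, a 0 * b 1 - a 1 * b 0]

def dot3 (a b : V3) : ℝ := ∑ i, a i * b i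

def IsPolyDeg (k : ℕ) (f : V3 → ℝ) : Prop :=
  ∃ p : MvPolynomial (Fin 3) ℝ, p.totalDegree ≤ k ∧ ∀ x, f x = MvPolynomial.eval x p

def IsPolyDegV (k : ℕ) (v : V3 → V3) : Prop := ∀ i, IsPolyDeg k fun x => v x i

def Wmem (k : ℕ) (xK : V3) (v : V3 → V3) : Prop :=
  ∃ q r, IsPolyDeg (k + 1) q ∧ IsPolyDegV 1 r ∧ ∀ x, v x = grad q x + cross3 (x - xK) (r x)

def T2 : Set (ℝ × ℝ) := {p | 0 ≤ p.1 ∧ 0 ≤ p.2 ∧ p.1 + p.2 ≤ 1}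

def PoincareOp (xK : V3) (q : V3 → V3) (x : V3) : V3 :=
  - cross3 (x - xK) (∫ t in (0:ℝ)..1, t • q (t • (x - xK) + xK))


def IsAffine (f : V3 → ℝ) : Prop := ∃ (c : V3) (d : ℝ), ∀ y, f y = dot3 c y + d

/-!
With `f = (8λ_l - 3)/4` (affine, `∇f = 2∇λ_l`) and the constant vector `w = n_l × ∇λ_{l_i}`,
the product rule and `curl ((x - x_K) × w) = -2w` give
`curl (f (x - x_K) × w) = -2 f w + (∇f · w)(x - x_K) - (∇f · (x - x_K)) w`;
the other two terms of `φ` are constant. The triple product `∇λ_l · (n_l × ∇λ_{l_i})` vanishes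
because all three vectors are orthogonal to the edge joining the two vertices other than `x_l`
and `x_{l_i}`, and `∇λ_l · (x - x_K) = λ_l(x) - 1/4` since `λ_l(x_K) = 1/4`.
-/

open Matrix

lemma cross3_eq_crossProduct (a b : V3) : cross3 a b = a ⨯₃ b := rfl

lemma dot3_eq_dotProduct (a b : V3) : dot3 a b = a ⬝ᵥ b := rfl

lemma dot3_cross3_eq_zero_of_orthogonal {a b c u : V3} (hu : u ≠ 0)
    (ha : dot3 a u = 0) (hb : dot3 b u = 0) (hc : dot3 c u = 0) :
    dot3 a (cross3 b c) = 0 := by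
  rw [dot3_eq_dotProduct, cross3_eq_crossProduct, triple_product_eq_det]
  refine exists_mulVec_eq_zero_iff (M := Matrix.of ![a, b, c]) |>.1 ⟨u, hu, ?_⟩
  ext i
  fin_cases i <;> simpa [mulVec] using ‹_›

lemma dot3_sub_eq_of_eq_dot3_add {f : V3 → ℝ} {a : V3} {b : ℝ}
    (hf : ∀ z, f z = dot3 a z + b) (u v : V3) : dot3 a (u - v) = f u - f v := by
  simp only [hf, dot3_eq_dotProduct, dotProduct_sub]
  ring

lemma apply_centroid_four_of_eq_dot3_add {f : V3 → ℝ} {a : V3} {b : ℝ}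
    (hf : ∀ z, f z = dot3 a z + b) (p : Fin 4 → V3) :
    f ((4 : ℝ)⁻¹ • (p 0 + p 1 + p 2 + p 3))
      = 4⁻¹ * (f (p 0) + f (p 1) + f (p 2) + f (p 3)) := by
  simp only [hf, dot3, Pi.smul_apply, Pi.add_apply, smul_eq_mul, Fin.sum_univ_three]
  ring

lemma pd_add_const (i : Fin 3) (f : V3 → ℝ) (c : ℝ) (y : V3) :
    pd i (fun z => f z + c) y = pd i f y := by
  simp [pd]

lemma curl_add_const (v : V3 → V3) (e : V3) (y : V3) :
    curl (fun z => v z + e) y = curl v y := by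
  simp only [curl, Pi.add_apply, pd_add_const]

lemma pd_dot3_add_const (i : Fin 3) (a : V3) (b : ℝ) (y : V3) :
    pd i (fun z => dot3 a z + b) y = a i := by
  have hL : (fun z => dot3 a z + b) =
      fun z => (∑ j, a j • ContinuousLinearMap.proj j : V3 →L[ℝ] ℝ) z + b := by
    ext z
    simp [dot3]
  rw [hL, pd_add_const]
  simp [pd, Pi.single_apply]

lemma grad_eq_of_eq_dot3_add {f : V3 → ℝ} {a : V3} {b : ℝ} (hf : ∀ z, f z = dot3 a z + b)
    (y : V3) : grad f y = a := by
  ext i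
  rw [grad, funext hf, pd_dot3_add_const]

lemma pd_mul (i : Fin 3) {f g : V3 → ℝ} {y : V3} (hf : DifferentiableAt ℝ f y)
    (hg : DifferentiableAt ℝ g y) :
    pd i (fun z => f z * g z) y = f y * pd i g y + g y * pd i f y := by
  simp [pd, fderiv_fun_mul hf hg]

lemma curl_smul {f : V3 → ℝ} {u : V3 → V3} {y : V3} (hf : DifferentiableAt ℝ f y)
    (hu : ∀ i, DifferentiableAt ℝ (fun z => u z i) y) :
    curl (fun z => f z • u z) y = f y • curl u y + cross3 (grad f y) (u y) := by
  ext i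
  fin_cases i <;>
  · simp only [curl, cross3, grad, Fin.isValue, Pi.add_apply, Pi.smul_apply, smul_eq_mul,
      pd_mul _ hf (hu _), Fin.zero_eta, Fin.mk_one, Fin.reduceFinMk, cons_val, cons_val_zero,
      cons_val_one, smul_cons, smul_empty]
    ring

lemma differentiableAt_cross3_sub_const (p w y : V3) (i : Fin 3) :
    DifferentiableAt ℝ (fun z => cross3 (z - p) w i) y := by
  fin_cases i <;> simp [cross3] <;> fun_prop

lemma pd_cross3_sub_const (i j : Fin 3) (p w y : V3) :
    pd i (fun z => cross3 (z - p) w j) y = cross3 (Pi.single i 1) w j := by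
  have hL : (fun z => cross3 (z - p) w j) = fun z =>
      ((ContinuousLinearMap.proj j).comp
        (LinearMap.toContinuousLinearMap (crossProduct.flip w)) : V3 →L[ℝ] ℝ) z - cross3 p w j := by
    ext z
    simp [cross3_eq_crossProduct, map_sub]
  rw [pd, hL, fderiv_sub_const, ContinuousLinearMap.fderiv]
  simp [cross3_eq_crossProduct]

lemma curl_cross3_sub_const (p w y : V3) :
    curl (fun z => cross3 (z - p) w) y = (-2 : ℝ) • w := by
  ext i
  simp only [curl, pd_cross3_sub_const]
  fin_cases i <;>
  · simp only [cross3, Fin.isValue, Fin.zero_eta, Fin.mk_one, Fin.reduceFinMk, ne_eq, Fin.reduceEq,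
      zero_ne_one, one_ne_zero, not_false_eq_true, Pi.single_eq_same, Pi.single_eq_of_ne, cons_val,
      cons_val_zero, cons_val_one, Pi.smul_apply, smul_eq_mul, one_mul, zero_mul, sub_zero,
      sub_self, zero_sub]
    ring

lemma curl_affine_smul_cross3_sub_const {f : V3 → ℝ} {a : V3} {b : ℝ}
    (hf : ∀ z, f z = dot3 a z + b) (p w y : V3) :
    curl (fun z => f z • cross3 (z - p) w) y
      = dot3 a w • (y - p) - (dot3 a (y - p) + 2 * f y) • w := by
  have hfd : DifferentiableAt ℝ f y := by
    rw [funext hf]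
    simp only [dot3]
    fun_prop
  rw [curl_smul hfd (differentiableAt_cross3_sub_const p w y), curl_cross3_sub_const,
    grad_eq_of_eq_dot3_add hf, cross3_eq_crossProduct, cross3_eq_crossProduct,
    cross_cross_eq_smul_sub_smul', dot3_eq_dotProduct, dot3_eq_dotProduct,
    dotProduct_comm (y - p) a]
  module

lemma Fin.exists_pair_ne_avoiding_of_ne {a b : Fin 4} (h : b ≠ a) :
    ∃ m n : Fin 4, m ≠ n ∧ m ≠ a ∧ m ≠ b ∧ n ≠ a ∧ n ≠ b := by
  revert a b
  decide

theorem stmt8_general (x : Fin 4 → V3) (hx : AffineIndependent ℝ x)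
    (lam : Fin 4 → V3 → ℝ) (haff : ∀ l', IsAffine (lam l'))
    (hdual : ∀ l' m, lam l' (x m) = if l' = m then 1 else 0)
    (xK : V3) (hxK : xK = (4 : ℝ)⁻¹ • (x 0 + x 1 + x 2 + x 3))
    (l li : Fin 4) (hli : li ≠ l)
    (nl : V3)
    -- n_l is normal to the face F_l opposite x l
    (hperp : ∀ a b : Fin 4, a ≠ l → b ≠ l → dot3 nl (x a - x b) = 0) :
    ∀ y, curl (fun z =>
        ((4 : ℝ)⁻¹ * (8 * lam l z - 3)) • cross3 (z - xK) (cross3 nl (grad (lam li) z))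
        + ((4 : ℝ)⁻¹ * dot3 (x l - xK) nl) • grad (lam li) z
        + (16 : ℝ)⁻¹ • nl) y
      = (2 * (1 - 3 * lam l y)) • cross3 nl (grad (lam li) y) := by
  intro y
  obtain ⟨cl, dl, hl⟩ := haff l
  obtain ⟨ci, di, hi⟩ := haff li
  obtain ⟨m, n, hmn, hml, hmli, hnl, hnli⟩ := Fin.exists_pair_ne_avoiding_of_ne hli
  have htriple : dot3 cl (cross3 nl ci) = 0 := by
    refine dot3_cross3_eq_zero_of_orthogonal (sub_ne_zero.2 (hx.injective.ne hmn)) ?_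
      (hperp m n hml hnl) ?_
    · rw [dot3_sub_eq_of_eq_dot3_add hl, hdual, hdual, if_neg hml.symm, if_neg hnl.symm, sub_self]
    · rw [dot3_sub_eq_of_eq_dot3_add hi, hdual, hdual, if_neg hmli.symm, if_neg hnli.symm,
        sub_self]
  have hbary : lam l xK = 4⁻¹ := by
    rw [hxK, apply_centroid_four_of_eq_dot3_add hl,
      ← Fin.sum_univ_four (f := fun m => lam l (x m))]
    simp [hdual]
  have hcoef (z : V3) :
      (4 : ℝ)⁻¹ * (8 * lam l z - 3) = dot3 ((2 : ℝ) • cl) z + (2 * dl - 3 / 4) := by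
    rw [hl, dot3_eq_dotProduct, dot3_eq_dotProduct, smul_dotProduct, smul_eq_mul]
    ring
  simp only [grad_eq_of_eq_dot3_add hi]
  rw [curl_add_const, curl_add_const, curl_affine_smul_cross3_sub_const hcoef,
    dot3_sub_eq_of_eq_dot3_add hcoef, hbary, dot3_eq_dotProduct, smul_dotProduct,
    ← dot3_eq_dotProduct, htriple]
  module

/-- curl φ_{F_l,i} = 2(1 − 3λ_l) n_l × ∇λ_{l_i}. -/
theorem stmt8 (x : Fin 4 → V3) (hx : AffineIndependent ℝ x)
    (lam : Fin 4 → V3 → ℝ) (haff : ∀ l', IsAffine (lam l'))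
    (hdual : ∀ l' m, lam l' (x m) = if l' = m then 1 else 0)
    (xK : V3) (hxK : xK = (4 : ℝ)⁻¹ • (x 0 + x 1 + x 2 + x 3))
    (l li : Fin 4) (hli : li ≠ l)
    (nl : V3) (hnl : ‖nl‖ = 1)
    -- n_l is normal to the face F_l opposite x l
    (hperp : ∀ a b : Fin 4, a ≠ l → b ≠ l → dot3 nl (x a - x b) = 0)
    -- n_l is the outward normal
    (hout : ∀ a : Fin 4, a ≠ l → dot3 nl (x l - x a) < 0) :
    ∀ y, curl (fun z =>
        ((4 : ℝ)⁻¹ * (8 * lam l z - 3)) • cross3 (z - xK) (cross3 nl (grad (lam li) z))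
        + ((4 : ℝ)⁻¹ * dot3 (x l - xK) nl) • grad (lam li) z
        + (16 : ℝ)⁻¹ • nl) y
      = (2 * (1 - 3 * lam l y)) • cross3 nl (grad (lam li) y) :=
  stmt8_general x hx lam haff hdual xK hxK l li hli nl hperp
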